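/- Let G be a graph of order n with e(G) edges whose complement Ḡ is connected. Then the distance signless Laplacian spectral radius of the complement satisfies μ₁(D^Q(Ḡ)) ≥ 2(n − 1) + 4e(G)/n. -/

import Mathlib

open scoped Classical
open Finset

/-- The distance matrix of a graph: the `(u,v)` entry is the graph distance between `u` and `v`. -/
noncomputable def distMatrix {n : ℕ} (G : SimpleGraph (Fin n)) : Matrix (Fin n) (Fin n) ℝ :=
  fun u v => (G.dist u v : ℝ)

/-- The largest (real) eigenvalue of a matrix, i.e. the spectral radius for matrices such as
distance matrices of connected graphs. -/
noncomputable def specMax {n : ℕ} (M : Matrix (Fin n) (Fin n) ℝ) : ℝ :=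
  sSup {t : ℝ | ∃ x : Fin n → ℝ, x ≠ 0 ∧ M.mulVec x = t • x}

/-- The transmission of a vertex: the sum of the distances to all other vertices. -/
noncomputable def transmission {n : ℕ} (G : SimpleGraph (Fin n)) (v : Fin n) : ℕ :=
  ∑ u, G.dist v u

/-- The distance signless Laplacian matrix `Tr(G) + D(G)`. -/
noncomputable def distSignlessLapMatrix {n : ℕ} (G : SimpleGraph (Fin n)) :
    Matrix (Fin n) (Fin n) ℝ :=
  Matrix.diagonal (fun v => (transmission G v : ℝ)) + distMatrix G

/-- The transmission `σ(G)` of a graph: the sum of distances over all unordered pairs. -/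
noncomputable def transSigma {n : ℕ} (G : SimpleGraph (Fin n)) : ℝ :=
  (∑ v, (transmission G v : ℝ)) / 2

/-- The sum of `h` over the edges incident with `v`. -/
noncomputable def incSum {n : ℕ} (G : SimpleGraph (Fin n)) (h : Sym2 (Fin n) → ℝ) (v : Fin n) :
    ℝ :=
  ∑ e ∈ Finset.univ.filter (fun e => e ∈ G.incidenceSet v), h e

/-- `h` is (the indicator function of) a fractional `[a,b]`-factor of `G`. -/
def IsFractionalABFactor {n : ℕ} (G : SimpleGraph (Fin n)) (a b : ℕ)
    (h : Sym2 (Fin n) → ℝ) : Prop :=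
  (∀ e, 0 ≤ h e ∧ h e ≤ 1) ∧ (∀ e, e ∉ G.edgeSet → h e = 0) ∧
    ∀ v, (a : ℝ) ≤ incSum G h v ∧ incSum G h v ≤ (b : ℝ)

/-- `G` has a fractional `[a,b]`-factor. -/
def HasFractionalABFactor {n : ℕ} (G : SimpleGraph (Fin n)) (a b : ℕ) : Prop :=
  ∃ h, IsFractionalABFactor G a b h

/-- `G` is a fractional `[a,b]`-deleted graph: `G - e` has a fractional `[a,b]`-factor
for every edge `e` of `G`. -/
def IsFractionalABDeleted {n : ℕ} (G : SimpleGraph (Fin n)) (a b : ℕ) : Prop :=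
  ∀ e ∈ G.edgeSet, HasFractionalABFactor (G.deleteEdges {e}) a b

/-- `G` has a `k`-factor: a spanning `k`-regular subgraph. -/
def HasKFactor {n : ℕ} (G : SimpleGraph (Fin n)) (k : ℕ) : Prop :=
  ∃ H : SimpleGraph (Fin n), H ≤ G ∧ ∀ v, H.degree v = k

/-- `G` is ID-factor-critical: for every independent set `I` whose size has the same parity
as `n`, the graph `G - I` has a perfect matching. -/
def IsIDFactorCritical {n : ℕ} (G : SimpleGraph (Fin n)) : Prop :=
  ∀ I : Finset (Fin n), (∀ u ∈ I, ∀ v ∈ I, ¬ G.Adj u v) → I.card % 2 = n % 2 →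
    ∃ M : (G.induce ((I : Set (Fin n))ᶜ)).Subgraph, M.IsPerfectMatching

/-- The graph `I_r ∨ K_r ∨ (K_{n-3r-1} + I_{r+1})` on `Fin n`: vertices `< r` form the
independent set `I_r`, vertices in `[r, 2r)` form the clique `K_r`, vertices in `[2r, n-r-1)`
form the clique `K_{n-3r-1}`, and vertices in `[n-r-1, n)` form the independent set `I_{r+1}`;
all join edges are present except between `K_{n-3r-1}` and `I_{r+1}`. -/
def extremalGraph (n r : ℕ) : SimpleGraph (Fin n) where
  Adj u v := u ≠ v ∧ ¬((u : ℕ) < r ∧ (v : ℕ) < r) ∧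
    ¬(n - r - 1 ≤ (u : ℕ) ∧ n - r - 1 ≤ (v : ℕ)) ∧
    ¬((2 * r ≤ (u : ℕ) ∧ (u : ℕ) < n - r - 1) ∧ n - r - 1 ≤ (v : ℕ)) ∧
    ¬((2 * r ≤ (v : ℕ) ∧ (v : ℕ) < n - r - 1) ∧ n - r - 1 ≤ (u : ℕ))
  symm := ⟨fun u v ⟨h1, h2, h3, h4, h5⟩ =>
    ⟨h1.symm, fun h => h2 ⟨h.2, h.1⟩, fun h => h3 ⟨h.2, h.1⟩, h5, h4⟩⟩
  loopless := ⟨fun v h => h.1 rfl⟩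

/-! The all-ones vector `𝟙` bounds the spectral radius from below by the Rayleigh quotient
`𝟙ᵀ D^Q 𝟙 / n = 2 ∑ᵥ Tr(v) / n`. In `Ḡ`, every vertex `u ≠ v` is at distance at least `1` from `v`,
and at distance at least `2` when `uv` is an edge of `G`, so `Tr(v) ≥ n - 1 + deg_G v`; summing over
`v` gives `∑ᵥ Tr(v) ≥ n(n - 1) + 2e(G)`. -/

open Matrix

namespace Matrix.IsHermitian

variable {n : Type*} [Fintype n] [DecidableEq n] {A : Matrix n n ℝ} (hA : A.IsHermitian)

lemma dotProduct_mulVec_eq_sum_eigenvalues (x : n → ℝ) :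
    x ⬝ᵥ (A *ᵥ x) =
      ∑ i, hA.eigenvalues i * (x ᵥ* (hA.eigenvectorUnitary : Matrix n n ℝ)) i ^ 2 := by
  set U : Matrix n n ℝ := ↑hA.eigenvectorUnitary
  have hA' : A = U * diagonal hA.eigenvalues * Uᵀ := hA.spectral_theorem
  conv_lhs => rw [hA']
  rw [← mulVec_mulVec, ← mulVec_mulVec, dotProduct_mulVec, mulVec_transpose]
  simp only [dotProduct, mulVec_diagonal, sq]
  exact Finset.sum_congr rfl fun i _ => by ring

lemma dotProduct_self_vecMul_eigenvectorUnitary (x : n → ℝ) :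
    (x ᵥ* (hA.eigenvectorUnitary : Matrix n n ℝ)) ⬝ᵥ
      (x ᵥ* (hA.eigenvectorUnitary : Matrix n n ℝ)) = x ⬝ᵥ x := by
  set U : Matrix n n ℝ := ↑hA.eigenvectorUnitary
  have hU : U * Uᵀ = 1 := Unitary.coe_mul_star_self hA.eigenvectorUnitary
  rw [← dotProduct_mulVec, ← mulVec_transpose, mulVec_mulVec, hU, one_mulVec]

lemma dotProduct_mulVec_le {μ : ℝ} (hμ : ∀ i, hA.eigenvalues i ≤ μ) (x : n → ℝ) :
    x ⬝ᵥ (A *ᵥ x) ≤ μ * (x ⬝ᵥ x) := by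
  rw [hA.dotProduct_mulVec_eq_sum_eigenvalues, ← hA.dotProduct_self_vecMul_eigenvectorUnitary,
    dotProduct, Finset.mul_sum]
  exact Finset.sum_le_sum fun i _ => by
    rw [← sq]
    exact mul_le_mul_of_nonneg_right (hμ i) (sq_nonneg _)

lemma le_of_mulVec_eq_smul {μ t : ℝ} (hμ : ∀ i, hA.eigenvalues i ≤ μ) {x : n → ℝ} (hx : x ≠ 0)
    (hxt : A *ᵥ x = t • x) : t ≤ μ := by
  have hxx : 0 < x ⬝ᵥ x := by simpa using dotProduct_star_self_pos_iff.mpr hx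
  have h := hA.dotProduct_mulVec_le hμ x
  rw [hxt, dotProduct_smul, smul_eq_mul] at h
  exact le_of_mul_le_mul_right h hxx

lemma eigenvectorBasis_ne_zero (i : n) : ⇑(hA.eigenvectorBasis i) ≠ 0 := by
  simpa using hA.eigenvectorBasis.orthonormal.ne_zero i

end Matrix.IsHermitian

lemma Matrix.IsHermitian.dotProduct_mulVec_le_specMax {n : ℕ} {M : Matrix (Fin n) (Fin n) ℝ}
    (hM : M.IsHermitian) (x : Fin n → ℝ) : x ⬝ᵥ (M *ᵥ x) ≤ specMax M * (x ⬝ᵥ x) := by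
  rcases isEmpty_or_nonempty (Fin n) with hn | hn
  · simp [dotProduct]
  obtain ⟨i₀, hi₀⟩ := Finite.exists_max hM.eigenvalues
  have hbdd : BddAbove {t : ℝ | ∃ x : Fin n → ℝ, x ≠ 0 ∧ M *ᵥ x = t • x} :=
    ⟨_, fun t ⟨y, hy, hyt⟩ => hM.le_of_mulVec_eq_smul hi₀ hy hyt⟩
  have hmax : hM.eigenvalues i₀ ≤ specMax M :=
    le_csSup hbdd ⟨_, hM.eigenvectorBasis_ne_zero i₀, hM.mulVec_eigenvectorBasis i₀⟩
  exact hM.dotProduct_mulVec_le (fun i => (hi₀ i).trans hmax) x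

section DistSignlessLaplacian

variable {n : ℕ}

lemma isHermitian_distSignlessLapMatrix (G : SimpleGraph (Fin n)) :
    (distSignlessLapMatrix G).IsHermitian := by
  refine (isHermitian_diagonal _).add ?_
  ext u v
  simp [distMatrix, SimpleGraph.dist_comm]

lemma one_dotProduct_distSignlessLapMatrix_mulVec_one (G : SimpleGraph (Fin n)) :
    (1 : Fin n → ℝ) ⬝ᵥ (distSignlessLapMatrix G *ᵥ 1) = 2 * ∑ v, (transmission G v : ℝ) := by
  have hrow : distMatrix G *ᵥ 1 = fun v => (transmission G v : ℝ) := by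
    ext v
    simp [distMatrix, transmission, mulVec, dotProduct]
  simp only [distSignlessLapMatrix, add_mulVec, hrow, dotProduct_add]
  simp [dotProduct, mulVec_diagonal, two_mul]

lemma card_sub_one_add_degree_le_transmission_compl {G : SimpleGraph (Fin n)}
    (hconn : Gᶜ.Connected) (v : Fin n) : n - 1 + G.degree v ≤ transmission Gᶜ v := by
  have hdist : ∀ u ∈ univ.erase v, 1 + (if G.Adj v u then 1 else 0) ≤ Gᶜ.dist v u := by
    intro u hu
    have hne : v ≠ u := (ne_of_mem_erase hu).symm
    split_ifs with hadj
    · exact hconn.one_lt_dist_of_ne_of_not_adj hne fun h => h.2 hadj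
    · exact hconn.pos_dist_of_ne hne
  calc n - 1 + G.degree v = ∑ u ∈ univ.erase v, (1 + if G.Adj v u then 1 else 0) := by
        rw [sum_add_distrib, sum_const, card_erase_of_mem (mem_univ v), card_univ,
          Fintype.card_fin, smul_eq_mul, mul_one,
          sum_erase univ (f := fun u => if G.Adj v u then 1 else 0)
            (if_neg (G.loopless.irrefl v)),
          sum_boole, SimpleGraph.degree, SimpleGraph.neighborFinset_eq_filter, Nat.cast_id]
    _ ≤ ∑ u ∈ univ.erase v, Gᶜ.dist v u := sum_le_sum hdist
    _ ≤ transmission Gᶜ v := sum_le_sum_of_subset (erase_subset v univ)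

lemma le_sum_transmission_compl {G : SimpleGraph (Fin n)} (hconn : Gᶜ.Connected) :
    n * (n - 1) + 2 * #G.edgeFinset ≤ ∑ v, transmission Gᶜ v := by
  calc n * (n - 1) + 2 * #G.edgeFinset = ∑ v, (n - 1 + G.degree v) := by
        rw [sum_add_distrib, sum_const, card_univ, Fintype.card_fin, smul_eq_mul,
          G.sum_degrees_eq_twice_card_edges]
    _ ≤ ∑ v, transmission Gᶜ v :=
        sum_le_sum fun v _ => card_sub_one_add_degree_le_transmission_compl hconn v

end DistSignlessLaplacian

/-- If `Gᶜ` is connected then `μ₁(D^Q(Gᶜ)) ≥ 2(n-1) + 4e(G)/n`. -/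
theorem stmt_19 {n : ℕ} (G : SimpleGraph (Fin n)) (hconn : Gᶜ.Connected) :
    2 * ((n : ℝ) - 1) + 4 * (G.edgeFinset.card : ℝ) / n ≤
      specMax (distSignlessLapMatrix Gᶜ) := by
  have hn : 1 ≤ n := Fin.pos_iff_nonempty.mpr hconn.nonempty
  have hn' : (0 : ℝ) < n := by exact_mod_cast hn
  have htrans : (n : ℝ) * (n - 1) + 2 * #G.edgeFinset ≤ ∑ v, (transmission Gᶜ v : ℝ) := by
    have h := (Nat.cast_le (α := ℝ)).mpr (le_sum_transmission_compl hconn)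
    push_cast [Nat.cast_sub hn] at h
    exact h
  have hrayleigh := (isHermitian_distSignlessLapMatrix Gᶜ).dotProduct_mulVec_le_specMax 1
  rw [one_dotProduct_distSignlessLapMatrix_mulVec_one] at hrayleigh
  calc 2 * ((n : ℝ) - 1) + 4 * (G.edgeFinset.card : ℝ) / n
      = 2 * ((n : ℝ) * (n - 1) + 2 * #G.edgeFinset) / n := by field_simp; ring
    _ ≤ (2 * ∑ v, (transmission Gᶜ v : ℝ)) / n := by gcongr
    _ ≤ specMax (distSignlessLapMatrix Gᶜ) := by
      rw [div_le_iff₀ hn']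
      simpa [dotProduct] using hrayleigh
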